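/- For every A ∈ ℝ^{S×m} and X ∈ ℝ^{n×m}, the spectral norm of their column-wise Khatri–Rao product satisfies ‖A∗X‖ ≤ (max_{j∈[m]} ‖A^j‖) · ‖X‖, where A^j denotes the j-th column of A and ‖A^j‖ its Euclidean norm. -/

import Mathlib

open scoped BigOperators

/-- The Euclidean norm of a finitely supported real vector. -/
noncomputable def eNorm {β : Type*} [Fintype β] (v : β → ℝ) : ℝ :=
  Real.sqrt (∑ i, v i ^ 2)

/-- The spectral norm of a real matrix: `‖M‖ = max_{ξ ∈ S^{m-1}} ‖Mξ‖`. -/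
noncomputable def specNorm {α β : Type*} [Fintype α] [Fintype β]
    (M : Matrix α β ℝ) : ℝ :=
  ⨆ ξ : {v : β → ℝ // eNorm v = 1}, eNorm (M.mulVec ξ.1)

/-- The column-wise Khatri–Rao product: `(A ∗ X)_{(ν,i),j} = A_{νj} ⬝ X_{ij}`. -/
def khatriRao {S n m : ℕ} (A : Matrix (Fin S) (Fin m) ℝ) (X : Matrix (Fin n) (Fin m) ℝ) :
    Matrix (Fin S × Fin n) (Fin m) ℝ :=
  Matrix.of fun p j => A p.1 j * X p.2 j

/-! Block `ν` of `(A ∗ X) ξ` is `X (A_ν ∘ ξ)`, with `A_ν ∘ ξ` the entrywise product of the `ν`-th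
row of `A` with `ξ`. Hence
`‖(A ∗ X) ξ‖² = ∑_ν ‖X (A_ν ∘ ξ)‖² ≤ ‖X‖² ∑_ν ∑_j A_{νj}² ξ_j² = ‖X‖² ∑_j ‖A^j‖² ξ_j²`,
which is at most `(max_j ‖A^j‖)² ‖X‖² ‖ξ‖²`. -/

section

variable {α β : Type*} [Fintype α] [Fintype β]

lemma eNorm_nonneg (v : β → ℝ) : 0 ≤ eNorm v :=
  Real.sqrt_nonneg _

lemma sq_eNorm (v : β → ℝ) : eNorm v ^ 2 = ∑ i, v i ^ 2 :=
  Real.sq_sqrt (Finset.sum_nonneg fun _ _ => sq_nonneg _)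

lemma eNorm_eq_norm_toLp (v : β → ℝ) : eNorm v = ‖WithLp.toLp 2 v‖ := by
  simp [eNorm, EuclideanSpace.norm_eq]

lemma specNorm_nonneg (M : Matrix α β ℝ) : 0 ≤ specNorm M :=
  Real.iSup_nonneg fun _ => eNorm_nonneg _

open scoped Matrix Matrix.Norms.L2Operator

lemma eNorm_mulVec_le_l2_opNorm [DecidableEq β] (M : Matrix α β ℝ) (v : β → ℝ) :
    eNorm (M *ᵥ v) ≤ ‖M‖ * eNorm v := by
  rw [eNorm_eq_norm_toLp, eNorm_eq_norm_toLp]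
  exact M.l2_opNorm_mulVec (WithLp.toLp 2 v)

lemma specNorm_eq_l2_opNorm [DecidableEq β] (M : Matrix α β ℝ) : specNorm M = ‖M‖ := by
  have hbound : ∀ ξ : {v : β → ℝ // eNorm v = 1}, eNorm (M *ᵥ ξ.1) ≤ ‖M‖ := fun ξ => by
    simpa [ξ.2] using eNorm_mulVec_le_l2_opNorm M ξ.1
  refine le_antisymm (Real.iSup_le hbound (norm_nonneg M)) ?_
  refine ContinuousLinearMap.opNorm_le_of_unit_norm (specNorm_nonneg M) fun x hx => ?_
  have hx' : eNorm x.ofLp = 1 := by rwa [eNorm_eq_norm_toLp]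
  calc _ = eNorm (M *ᵥ x.ofLp) := by rw [eNorm_eq_norm_toLp]; rfl
    _ ≤ specNorm M := le_ciSup ⟨‖M‖, Set.forall_mem_range.2 hbound⟩ ⟨x.ofLp, hx'⟩

lemma eNorm_mulVec_le (M : Matrix α β ℝ) (v : β → ℝ) :
    eNorm (M *ᵥ v) ≤ specNorm M * eNorm v := by
  classical
  rw [specNorm_eq_l2_opNorm]
  exact eNorm_mulVec_le_l2_opNorm M v

lemma sum_sq_eNorm_mul_le {K : ℝ} (A : Matrix α β ℝ) (hA : ∀ j, eNorm (fun i => A i j) ≤ K)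
    (ξ : β → ℝ) : ∑ i, eNorm (fun j => A i j * ξ j) ^ 2 ≤ K ^ 2 * eNorm ξ ^ 2 := by
  have hcol : ∀ j, ∑ i, A i j ^ 2 ≤ K ^ 2 := fun j => by
    rw [← sq_eNorm]
    exact pow_le_pow_left₀ (eNorm_nonneg _) (hA j) 2
  calc ∑ i, eNorm (fun j => A i j * ξ j) ^ 2 = ∑ j, ξ j ^ 2 * ∑ i, A i j ^ 2 := by
        simp only [sq_eNorm, mul_pow, Finset.mul_sum]
        rw [Finset.sum_comm]
        simp only [mul_comm]
    _ ≤ ∑ j, ξ j ^ 2 * K ^ 2 :=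
        Finset.sum_le_sum fun j _ => mul_le_mul_of_nonneg_left (hcol j) (sq_nonneg _)
    _ = K ^ 2 * eNorm ξ ^ 2 := by rw [sq_eNorm, Finset.mul_sum]; simp only [mul_comm]

end

section

open scoped Matrix

variable {S n m : ℕ} (A : Matrix (Fin S) (Fin m) ℝ) (X : Matrix (Fin n) (Fin m) ℝ)

lemma khatriRao_mulVec_apply (ξ : Fin m → ℝ) (ν : Fin S) (i : Fin n) :
    (khatriRao A X *ᵥ ξ) (ν, i) = (X *ᵥ fun j => A ν j * ξ j) i := by
  simp only [Matrix.mulVec, dotProduct, khatriRao, Matrix.of_apply]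
  exact Finset.sum_congr rfl fun j _ => by ring

lemma sq_eNorm_khatriRao_mulVec (ξ : Fin m → ℝ) :
    eNorm (khatriRao A X *ᵥ ξ) ^ 2 = ∑ ν, eNorm (X *ᵥ fun j => A ν j * ξ j) ^ 2 := by
  simp only [sq_eNorm, Fintype.sum_prod_type, khatriRao_mulVec_apply]

lemma eNorm_khatriRao_mulVec_le {K : ℝ} (hA : ∀ j, eNorm (fun ν => A ν j) ≤ K) (hK : 0 ≤ K)
    (ξ : Fin m → ℝ) : eNorm (khatriRao A X *ᵥ ξ) ≤ K * specNorm X * eNorm ξ := by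
  have hbound : 0 ≤ K * specNorm X * eNorm ξ :=
    mul_nonneg (mul_nonneg hK (specNorm_nonneg X)) (eNorm_nonneg ξ)
  refine (pow_le_pow_iff_left₀ (eNorm_nonneg _) hbound two_ne_zero).1 ?_
  calc eNorm (khatriRao A X *ᵥ ξ) ^ 2 = ∑ ν, eNorm (X *ᵥ fun j => A ν j * ξ j) ^ 2 :=
        sq_eNorm_khatriRao_mulVec A X ξ
    _ ≤ ∑ ν, (specNorm X * eNorm fun j => A ν j * ξ j) ^ 2 :=
        Finset.sum_le_sum fun ν _ => pow_le_pow_left₀ (eNorm_nonneg _) (eNorm_mulVec_le X _) 2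
    _ = specNorm X ^ 2 * ∑ ν, eNorm (fun j => A ν j * ξ j) ^ 2 := by
        simp only [mul_pow, Finset.mul_sum]
    _ ≤ specNorm X ^ 2 * (K ^ 2 * eNorm ξ ^ 2) :=
        mul_le_mul_of_nonneg_left (sum_sq_eNorm_mul_le A hA ξ) (sq_nonneg _)
    _ = (K * specNorm X * eNorm ξ) ^ 2 := by ring

end

/-- `‖A ∗ X‖ ≤ (max_j ‖A^j‖) ⬝ ‖X‖`, where `A^j` is the `j`-th
column of `A`. -/
theorem specNorm_khatriRao_le {S n m : ℕ}
    (A : Matrix (Fin S) (Fin m) ℝ) (X : Matrix (Fin n) (Fin m) ℝ) :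
    specNorm (khatriRao A X) ≤ (⨆ j : Fin m, eNorm fun ν => A ν j) * specNorm X := by
  set K := ⨆ j : Fin m, eNorm fun ν => A ν j
  have hK : 0 ≤ K := Real.iSup_nonneg fun _ => eNorm_nonneg _
  have hA : ∀ j, eNorm (fun ν => A ν j) ≤ K := le_ciSup (Finite.bddAbove_range _)
  refine Real.iSup_le (fun ξ => ?_) (mul_nonneg hK (specNorm_nonneg X))
  simpa only [ξ.2, mul_one] using eNorm_khatriRao_mulVec_le A X hA hK ξ.1
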